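/- Let R be a probability measure on a product space X × Y with reference coupling structure, and let π* be a probability measure with dπ*/dR(x,y) = f(x)g(y)/Z for measurable positive f, g and normalization Z. Then for any probability measure π with the same two marginals as π* and π ≪ R, KL(π‖R) − KL(π*‖R) = KL(π‖π*) ≥ 0. In particular π* is the unique minimizer of KL(·‖R) over couplings with its marginals. -/

import Mathlib

open MeasureTheory

/-- Kullback–Leibler divergence (for `μ ≪ ν` with integrable log-density). -/
noncomputable def KLdiv {Ω : Type*} [MeasurableSpace Ω] (μ ν : Measure Ω) : ℝ :=
  ∫ x, Real.log ((μ.rnDeriv ν) x).toReal ∂μ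

/-!
Write `ρ(x, y) = f(x) g(y) / Z` for the density of `π*` with respect to `R`. Since `π ≪ π* ≪ R`,
the chain rule for Radon–Nikodym derivatives splits `log dπ/dR = log dπ/dπ* + log ρ` `π`-a.e.,
so `KL(π‖R) = KL(π‖π*) + ∫ log ρ dπ`. As `log ρ(x, y) = (log f(x) − log Z) + log g(y)` is a sum of
a function of `x` and a function of `y`, its integral depends only on the marginals, whence
`∫ log ρ dπ = ∫ log ρ dπ* = KL(π*‖R)`. The remaining claims are Gibbs' inequality for `KL(π‖π*)`
and its equality case.
-/

open Filter Topology InformationTheory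

section Marginals

def symmClamp (c t : ℝ) : ℝ := max (-c) (min t c)

lemma continuous_symmClamp (c : ℝ) : Continuous (symmClamp c) :=
  continuous_const.max (continuous_id.min continuous_const)

lemma abs_symmClamp_le (c t : ℝ) : |symmClamp c t| ≤ |c| := by
  unfold symmClamp
  rw [abs_le]
  rcases abs_cases c with ⟨h, _⟩ | ⟨h, _⟩ <;> rw [h] <;> constructor <;>
    simp only [min_def, max_def] <;> split_ifs <;> linarith

lemma abs_symmClamp_add_symmClamp_le {c : ℝ} (hc : 0 ≤ c) (s t : ℝ) :
    |symmClamp c s + symmClamp c t| ≤ |s + t| := by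
  unfold symmClamp
  rw [abs_le]
  rcases abs_cases (s + t) with ⟨h, _⟩ | ⟨h, _⟩ <;> rw [h] <;> constructor <;>
    simp only [min_def, max_def] <;> split_ifs <;> linarith

lemma tendsto_symmClamp_natCast (t : ℝ) :
    Tendsto (fun n : ℕ => symmClamp n t) atTop (𝓝 t) := by
  refine tendsto_const_nhds.congr' ?_
  filter_upwards [eventually_ge_atTop ⌈|t|⌉₊] with n hn
  obtain ⟨hlo, hhi⟩ := abs_le.mp ((Nat.le_ceil _).trans (Nat.cast_le.mpr hn))
  rw [symmClamp, min_eq_left hhi, max_eq_right hlo]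

lemma integral_comp_eq_of_map_eq {α β : Type*} [MeasurableSpace α] [MeasurableSpace β]
    {μ ν : Measure α} {φ : α → β} (hφ : Measurable φ) (hmap : μ.map φ = ν.map φ)
    {h : β → ℝ} (hh : Measurable h) :
    ∫ x, h (φ x) ∂μ = ∫ x, h (φ x) ∂ν := by
  rw [← integral_map hφ.aemeasurable hh.aestronglyMeasurable, hmap,
    integral_map hφ.aemeasurable hh.aestronglyMeasurable]

lemma integrable_symmClamp_comp {α : Type*} [MeasurableSpace α] (μ : Measure α)
    [IsFiniteMeasure μ] {φ : α → ℝ} (hφ : Measurable φ) (c : ℝ) :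
    Integrable (fun x => symmClamp c (φ x)) μ :=
  .of_bound ((continuous_symmClamp c).measurable.comp hφ).aestronglyMeasurable |c|
    (.of_forall fun _ => abs_symmClamp_le c _)

variable {X Y : Type*} [MeasurableSpace X] [MeasurableSpace Y] {a : X → ℝ} {b : Y → ℝ}

lemma tendsto_integral_symmClamp_add (μ : Measure (X × Y)) [IsFiniteMeasure μ]
    (ha : Measurable a) (hb : Measurable b) (hint : Integrable (fun p => a p.1 + b p.2) μ) :
    Tendsto (fun n : ℕ => ∫ p, (symmClamp n (a p.1) + symmClamp n (b p.2)) ∂μ) atTop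
      (𝓝 (∫ p, (a p.1 + b p.2) ∂μ)) :=
  tendsto_integral_of_dominated_convergence (fun p => |a p.1 + b p.2|)
    (fun _ => (((continuous_symmClamp _).measurable.comp (ha.comp measurable_fst)).add
      ((continuous_symmClamp _).measurable.comp (hb.comp measurable_snd))).aestronglyMeasurable)
    hint.abs
    (fun n => .of_forall fun _ => abs_symmClamp_add_symmClamp_le n.cast_nonneg _ _)
    (.of_forall fun _ => (tendsto_symmClamp_natCast _).add (tendsto_symmClamp_natCast _))

lemma integral_symmClamp_add_eq_of_map_eq {μ ν : Measure (X × Y)}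
    [IsFiniteMeasure μ] [IsFiniteMeasure ν] (ha : Measurable a) (hb : Measurable b)
    (hfst : μ.map Prod.fst = ν.map Prod.fst) (hsnd : μ.map Prod.snd = ν.map Prod.snd) (c : ℝ) :
    ∫ p, (symmClamp c (a p.1) + symmClamp c (b p.2)) ∂μ
      = ∫ p, (symmClamp c (a p.1) + symmClamp c (b p.2)) ∂ν := by
  have hA : Measurable fun p : X × Y => a p.1 := ha.comp measurable_fst
  have hB : Measurable fun p : X × Y => b p.2 := hb.comp measurable_snd
  rw [integral_add (integrable_symmClamp_comp μ hA c) (integrable_symmClamp_comp μ hB c),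
    integral_add (integrable_symmClamp_comp ν hA c) (integrable_symmClamp_comp ν hB c),
    integral_comp_eq_of_map_eq measurable_fst hfst (h := fun x => symmClamp c (a x))
      ((continuous_symmClamp c).measurable.comp ha),
    integral_comp_eq_of_map_eq measurable_snd hsnd (h := fun y => symmClamp c (b y))
      ((continuous_symmClamp c).measurable.comp hb)]

/- `a` and `b` need not be separately integrable. Their truncations are bounded, so their
integrals only see the marginals, and `|symmClamp c s + symmClamp c t| ≤ |s + t|` lets
dominated convergence remove the truncation. -/
theorem integral_add_fst_snd_eq_of_map_eq {μ ν : Measure (X × Y)}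
    [IsFiniteMeasure μ] [IsFiniteMeasure ν] (ha : Measurable a) (hb : Measurable b)
    (hfst : μ.map Prod.fst = ν.map Prod.fst) (hsnd : μ.map Prod.snd = ν.map Prod.snd)
    (hμ : Integrable (fun p => a p.1 + b p.2) μ) (hν : Integrable (fun p => a p.1 + b p.2) ν) :
    ∫ p, (a p.1 + b p.2) ∂μ = ∫ p, (a p.1 + b p.2) ∂ν :=
  tendsto_nhds_unique
    ((tendsto_integral_symmClamp_add μ ha hb hμ).congr
      fun n : ℕ => integral_symmClamp_add_eq_of_map_eq ha hb hfst hsnd n)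
    (tendsto_integral_symmClamp_add ν ha hb hν)

end Marginals

section KullbackLeibler

variable {α : Type*} [MeasurableSpace α] {μ ν κ : Measure α}

lemma KLdiv_eq_integral_llr (μ ν : Measure α) : KLdiv μ ν = ∫ x, llr μ ν x ∂μ := rfl

lemma KLdiv_eq_toReal_klDiv [IsFiniteMeasure μ] [IsFiniteMeasure ν] (hμν : μ ≪ ν)
    (h_eq : μ Set.univ = ν Set.univ) : KLdiv μ ν = (klDiv μ ν).toReal :=
  (toReal_klDiv_of_measure_eq hμν h_eq).symm

lemma KLdiv_nonneg [IsFiniteMeasure μ] [IsFiniteMeasure ν] (hμν : μ ≪ ν)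
    (h_eq : μ Set.univ = ν Set.univ) : 0 ≤ KLdiv μ ν :=
  KLdiv_eq_toReal_klDiv hμν h_eq ▸ ENNReal.toReal_nonneg

lemma eq_of_KLdiv_eq_zero [IsFiniteMeasure μ] [IsFiniteMeasure ν] (hμν : μ ≪ ν)
    (h_eq : μ Set.univ = ν Set.univ) (hint : Integrable (llr μ ν) μ) (h0 : KLdiv μ ν = 0) :
    μ = ν := by
  rw [KLdiv_eq_toReal_klDiv hμν h_eq, ENNReal.toReal_eq_zero_iff] at h0
  exact klDiv_eq_zero_iff.mp (h0.resolve_right (klDiv_ne_top hμν hint))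

lemma llr_ae_eq_llr_add_llr [SigmaFinite μ] [SigmaFinite ν] [SigmaFinite κ]
    (hμν : μ ≪ ν) (hνκ : ν ≪ κ) : llr μ κ =ᵐ[μ] llr μ ν + llr ν κ := by
  have hμκ := hμν.trans hνκ
  filter_upwards [hμκ.ae_le (Measure.rnDeriv_mul_rnDeriv hμν), Measure.rnDeriv_pos hμν,
    hμν.ae_le (Measure.rnDeriv_lt_top μ ν), hμν.ae_le (Measure.rnDeriv_pos hνκ),
    hμκ.ae_le (Measure.rnDeriv_lt_top ν κ)] with x hmul hμν_pos hμν_top hνκ_pos hνκ_top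
  simp only [llr_def, Pi.add_apply, ← hmul, Pi.mul_apply, ENNReal.toReal_mul]
  exact Real.log_mul (ENNReal.toReal_pos hμν_pos.ne' hμν_top.ne).ne'
    (ENNReal.toReal_pos hνκ_pos.ne' hνκ_top.ne).ne'

lemma integrable_llr_of_integrable_llr [SigmaFinite μ] [SigmaFinite ν] [SigmaFinite κ]
    (hμν : μ ≪ ν) (hνκ : ν ≪ κ) (hμκ_int : Integrable (llr μ κ) μ)
    (hμν_int : Integrable (llr μ ν) μ) : Integrable (llr ν κ) μ :=
  (hμκ_int.sub hμν_int).congr <| by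
    filter_upwards [llr_ae_eq_llr_add_llr hμν hνκ] with x hx
    simp [hx]

lemma KLdiv_eq_KLdiv_add_integral_llr [SigmaFinite μ] [SigmaFinite ν] [SigmaFinite κ]
    (hμν : μ ≪ ν) (hνκ : ν ≪ κ) (hμν_int : Integrable (llr μ ν) μ)
    (hνκ_int : Integrable (llr ν κ) μ) :
    KLdiv μ κ = KLdiv μ ν + ∫ x, llr ν κ x ∂μ := by
  rw [KLdiv_eq_integral_llr, integral_congr_ae (llr_ae_eq_llr_add_llr hμν hνκ)]
  exact integral_add hμν_int hνκ_int

lemma llr_withDensity_ofReal_ae_eq [SigmaFinite ν] {h : α → ℝ} (hh : Measurable h)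
    (h_nonneg : ∀ x, 0 ≤ h x) :
    llr (ν.withDensity fun x => ENNReal.ofReal (h x)) ν =ᵐ[ν] fun x => Real.log (h x) := by
  filter_upwards [Measure.rnDeriv_withDensity ν hh.ennreal_ofReal] with x hx
  rw [llr, hx, ENNReal.toReal_ofReal (h_nonneg x)]

end KullbackLeibler

/-- Pythagoras identity for the static Schrödinger problem: if `π*` has a product-form
density `f(x)g(y)/Z` with respect to the reference coupling `R`, then for any coupling `π ≪ R`
with the same marginals as `π*`, `KL(π‖R) − KL(π*‖R) = KL(π‖π*) ≥ 0`; in particular `π*`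
uniquely minimizes `KL(·‖R)` over such couplings. -/
theorem schrodinger_static_pythagoras
    {X Y : Type*} [MeasurableSpace X] [MeasurableSpace Y]
    (R πstar π : Measure (X × Y))
    [IsProbabilityMeasure R] [IsProbabilityMeasure πstar] [IsProbabilityMeasure π]
    (f : X → ℝ) (g : Y → ℝ) (Z : ℝ)
    (hf : Measurable f) (hg : Measurable g)
    (hfpos : ∀ x, 0 < f x) (hgpos : ∀ y, 0 < g y) (hZ : 0 < Z)
    (hπstar : πstar = R.withDensity fun p => ENNReal.ofReal (f p.1 * g p.2 / Z))
    (hac : π ≪ R)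
    (hfst : π.map Prod.fst = πstar.map Prod.fst)
    (hsnd : π.map Prod.snd = πstar.map Prod.snd)
    (hint1 : Integrable (fun p => Real.log ((π.rnDeriv R) p).toReal) π)
    (hint2 : Integrable (fun p => Real.log ((πstar.rnDeriv R) p).toReal) πstar)
    (hint3 : Integrable (fun p => Real.log ((π.rnDeriv πstar) p).toReal) π) :
    KLdiv π R - KLdiv πstar R = KLdiv π πstar ∧
      0 ≤ KLdiv π πstar ∧
      (KLdiv π R = KLdiv πstar R → π = πstar) := by
  set a : X → ℝ := fun x => Real.log (f x) - Real.log Z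
  set b : Y → ℝ := fun y => Real.log (g y)
  have hρ_pos : ∀ p : X × Y, 0 < f p.1 * g p.2 / Z :=
    fun p => div_pos (mul_pos (hfpos p.1) (hgpos p.2)) hZ
  have hρ_meas : Measurable fun p : X × Y => f p.1 * g p.2 / Z :=
    ((hf.comp measurable_fst).mul (hg.comp measurable_snd)).div_const Z
  have hstar_R : πstar ≪ R := hπstar ▸ withDensity_absolutelyContinuous _ _
  have hR_star : R ≪ πstar := hπstar ▸ withDensity_absolutelyContinuous'
    hρ_meas.ennreal_ofReal.aemeasurable (.of_forall fun p => by simpa using hρ_pos p)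
  have hπ_star : π ≪ πstar := hac.trans hR_star
  have hllr : llr πstar R =ᵐ[R] fun p => a p.1 + b p.2 := by
    filter_upwards [hπstar ▸ llr_withDensity_ofReal_ae_eq hρ_meas fun p => (hρ_pos p).le]
      with p hp
    rw [hp, Real.log_div (mul_pos (hfpos p.1) (hgpos p.2)).ne' hZ.ne',
      Real.log_mul (hfpos p.1).ne' (hgpos p.2).ne']
    ring
  have hmid : Integrable (llr πstar R) π :=
    integrable_llr_of_integrable_llr hπ_star hstar_R hint1 hint3
  have hmarg : ∫ p, llr πstar R p ∂π = KLdiv πstar R :=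
    calc ∫ p, llr πstar R p ∂π = ∫ p, (a p.1 + b p.2) ∂π := integral_congr_ae (hac.ae_le hllr)
      _ = ∫ p, (a p.1 + b p.2) ∂πstar :=
        integral_add_fst_snd_eq_of_map_eq ((hf.log).sub measurable_const) hg.log hfst hsnd
          (hmid.congr (hac.ae_le hllr)) ((hint2 : Integrable (llr πstar R) πstar).congr
            (hstar_R.ae_le hllr))
      _ = KLdiv πstar R := (integral_congr_ae (hstar_R.ae_le hllr)).symm
  have hpyth : KLdiv π R - KLdiv πstar R = KLdiv π πstar := by
    rw [KLdiv_eq_KLdiv_add_integral_llr hπ_star hstar_R hint3 hmid, hmarg]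
    ring
  have hmass : π Set.univ = πstar Set.univ := by simp
  exact ⟨hpyth, KLdiv_nonneg hπ_star hmass, fun h =>
    eq_of_KLdiv_eq_zero hπ_star hmass hint3 (by rw [← hpyth, h, sub_self])⟩
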